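/- Let S_n denote the rational number Σ_{b=0}^{2^n−1} 3^(m(b,n)) / 2^n. Then for every n ≥ 1, S_{n+1} = 2 · S_n. -/

import Mathlib

def T (N : ℕ) : ℕ := if N % 2 = 0 then N / 2 else (3 * N + 1) / 2

def m (b n : ℕ) : ℕ := ((Finset.range n).filter (fun k => Odd (T^[k] b))).card

/-!
Splitting `b < 2 ^ (n + 1)` by parity, `T (2c) = c` and `T (2c + 1) = 3c + 2`, so
`m (2c) (n + 1) = m c n` and `m (2c + 1) (n + 1) = 1 + m (3c + 2) n`. Since
`T^[k] (x + 2 ^ (k + 1) * t) = T^[k] x + 2 * 3 ^ m x k * t`, the parities of the first `n` iterates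
of `b` only depend on `b mod 2 ^ n`, and `c ↦ 3c + 2` permutes the residues mod `2 ^ n`,
so the numerator `∑ 3 ^ m b n` gets multiplied by `1 + 3 = 4` while the denominator doubles.
-/

open Finset

lemma T_two_mul (c : ℕ) : T (2 * c) = c := by
  simp [T]

lemma T_two_mul_add_one (c : ℕ) : T (2 * c + 1) = 3 * c + 2 := by
  simp only [T]
  split <;> omega

lemma T_add_two_mul (x s : ℕ) : T (x + 2 * s) = T x + 3 ^ (if Odd x then 1 else 0) * s := by
  rcases Nat.even_or_odd' x with ⟨c, rfl | rfl⟩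
  · rw [← mul_add, T_two_mul, T_two_mul, if_neg (by simp)]
    ring
  · rw [show 2 * c + 1 + 2 * s = 2 * (c + s) + 1 by ring, T_two_mul_add_one, T_two_mul_add_one,
      if_pos (odd_two_mul_add_one c)]
    ring

lemma m_succ (x n : ℕ) : m x (n + 1) = (if Odd x then 1 else 0) + m (T x) n := by
  simp only [m, card_filter, sum_range_succ', Function.iterate_succ_apply,
    Function.iterate_zero_apply]
  exact add_comm _ _

lemma iterate_T_add_two_pow_mul (k x t : ℕ) :
    T^[k] (x + 2 ^ (k + 1) * t) = T^[k] x + 2 * 3 ^ m x k * t := by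
  induction k generalizing x t with
  | zero => simp [m]
  | succ k ih =>
    rw [Function.iterate_succ_apply, Function.iterate_succ_apply, pow_succ', mul_assoc,
      T_add_two_mul, mul_left_comm, ih, m_succ, pow_add]
    ring

lemma m_add_two_pow_mul (n x t : ℕ) : m (x + 2 ^ n * t) n = m x n := by
  refine congrArg card (filter_congr fun k hk => ?_)
  obtain ⟨j, rfl⟩ := Nat.exists_eq_add_of_lt (mem_range.mp hk)
  rw [show 2 ^ (k + j + 1) * t = 2 ^ (k + 1) * (2 ^ j * t) by ring, iterate_T_add_two_pow_mul,
    mul_assoc, Nat.odd_add, iff_true_intro (even_two_mul _), iff_true]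

lemma m_mod_two_pow (n x : ℕ) : m (x % 2 ^ n) n = m x n := by
  conv_rhs => rw [← Nat.mod_add_div x (2 ^ n), m_add_two_pow_mul]

lemma sum_range_two_mul {M : Type*} [AddCommMonoid M] (f : ℕ → M) (k : ℕ) :
    ∑ b ∈ range (2 * k), f b = ∑ c ∈ range k, (f (2 * c) + f (2 * c + 1)) := by
  induction k with
  | zero => simp
  | succ k ih => rw [mul_add_one, sum_range_succ, sum_range_succ, sum_range_succ, ih, add_assoc]

lemma sum_range_mul_add_mod {M : Type*} [AddCommMonoid M] (f : ℕ → M) {a N : ℕ}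
    (ha : a.Coprime N) (b : ℕ) :
    ∑ c ∈ range N, f ((a * c + b) % N) = ∑ c ∈ range N, f c := by
  rcases N.eq_zero_or_pos with rfl | hN
  · simp
  have hmaps : Set.MapsTo (fun c => (a * c + b) % N) (range N) (range N) :=
    fun c _ => mem_range.mpr (Nat.mod_lt _ hN)
  have hinj : Set.InjOn (fun c => (a * c + b) % N) (range N) := by
    intro c hc d hd hcd
    have hac : a * c ≡ a * d [MOD N] := Nat.ModEq.add_right_cancel' b hcd
    have hcd' : c ≡ d [MOD N] := Nat.ModEq.cancel_left_of_coprime (by rwa [Nat.gcd_comm]) hac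
    rwa [Nat.ModEq, Nat.mod_eq_of_lt (mem_range.mp hc), Nat.mod_eq_of_lt (mem_range.mp hd)] at hcd'
  exact sum_nbij _ hmaps hinj (surjOn_of_injOn_of_card_le _ hmaps hinj le_rfl) fun _ _ => rfl

lemma sum_three_pow_m_succ {R : Type*} [CommSemiring R] (n : ℕ) :
    ∑ b ∈ range (2 ^ (n + 1)), (3 : R) ^ m b (n + 1) = 4 * ∑ b ∈ range (2 ^ n), (3 : R) ^ m b n := by
  have hcop : Nat.Coprime 3 (2 ^ n) := Nat.Coprime.pow_right n (by norm_num)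
  have h_even (c : ℕ) : m (2 * c) (n + 1) = m c n := by
    rw [m_succ, if_neg (by simp), T_two_mul, zero_add]
  have h_odd (c : ℕ) : m (2 * c + 1) (n + 1) = 1 + m ((3 * c + 2) % 2 ^ n) n := by
    rw [m_succ, if_pos (odd_two_mul_add_one c), T_two_mul_add_one, m_mod_two_pow]
  rw [pow_succ', sum_range_two_mul]
  simp only [h_even, h_odd, pow_add, sum_add_distrib, ← mul_sum,
    sum_range_mul_add_mod (fun b => (3 : R) ^ m b n) hcop]
  ring

theorem stmt10 : ∀ n ≥ 1,
    ∑ b ∈ Finset.range (2 ^ (n + 1)), ((3 : ℚ) ^ m b (n + 1) / 2 ^ (n + 1))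
      = 2 * ∑ b ∈ Finset.range (2 ^ n), ((3 : ℚ) ^ m b n / 2 ^ n) := by
  intro n _
  rw [← sum_div, ← sum_div, sum_three_pow_m_succ, pow_succ]
  field_simp
  ring
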